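/- Let P = (π, w, dv) ∈ LD(n)^{•k} with n ≥ 1 and touch(P) = r, and let M = max(w). Then the number of north steps of π that are labelled M and start on the main diagonal is at most r, i.e. #{i : w_i = M and a_i(π) = 0} ≤ r. -/

import Mathlib

open Finset
open scoped Classical

/-- The predecessor of an index (truncated subtraction at `0`). -/
def fpred {N : ℕ} (j : Fin N) : Fin N :=
  ⟨(j : ℕ) - 1, lt_of_le_of_lt (Nat.sub_le _ _) j.isLt⟩

/-- `j` is a contractible valley of the path with area word `a` and labelling `w`. -/
def IsValley {N : ℕ} (a w : Fin N → ℕ) (j : Fin N) : Prop :=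
  0 < (j : ℕ) ∧
    (a j < a (fpred j) ∨ (a j = a (fpred j) ∧ w (fpred j) < w j))

/-- A decorated partially labelled Dyck path of size `N`, encoded by its area word `a`
(`a i` is the diagonal `y = x + a i` on which the `i`-th north step starts), its
labelling `w`, and its set `dv` of decorated contractible valleys. -/
structure DecPath (N : ℕ) where
  a : Fin N → ℕ
  w : Fin N → ℕ
  dv : Finset (Fin N)
  a_first : ∀ i : Fin N, (i : ℕ) = 0 → a i = 0
  a_step : ∀ j : Fin N, 0 < (j : ℕ) → a j ≤ a (fpred j) + 1
  w_incr : ∀ j : Fin N, 0 < (j : ℕ) → a (fpred j) < a j → w (fpred j) < w j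
  w_first : ∀ i : Fin N, (i : ℕ) = 0 → 0 < w i
  dv_valley : ∀ j ∈ dv, IsValley a w j

namespace DecPath

variable {N : ℕ} (P : DecPath N)

/-- The area statistic. -/
def area : ℕ := ∑ i, P.a i

/-- `(i, j)` is a diagonal inversion (primary or secondary). -/
def Inv (i j : Fin N) : Prop :=
  i < j ∧ ((P.a i = P.a j ∧ P.w i < P.w j) ∨ (P.a i = P.a j + 1 ∧ P.w j < P.w i))

/-- The diagonal inversions whose first coordinate is not decorated. -/
noncomputable def ndinvPairs : Finset (Fin N × Fin N) :=
  Finset.univ.filter fun p => P.Inv p.1 p.2 ∧ p.1 ∉ P.dv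

/-- The dinv statistic (as an integer). -/
noncomputable def dinv : ℤ := (P.ndinvPairs.card : ℤ) - (P.dv.card : ℤ)

/-- The touch statistic. -/
noncomputable def touch : ℕ :=
  (Finset.univ.filter fun i => i ∉ P.dv ∧ P.a i = 0 ∧ 0 < P.w i).card

/-- The number of labels equal to `0`. -/
noncomputable def zeros : ℕ := (Finset.univ.filter fun i => P.w i = 0).card

/-- The maximum label. -/
def wmax : ℕ := Finset.univ.sup P.w

/-- The number of maximal labels. -/
noncomputable def maxCount : ℕ := (Finset.univ.filter fun i => P.w i = P.wmax).card

/-- The exponent vector of the monomial `x^P` (labels equal to `0` are discarded). -/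
noncomputable def xexp : ℕ →₀ ℕ :=
  ∑ i, if P.w i ≠ 0 then Finsupp.single (P.w i) 1 else 0

/-- The exponent vector of `x^P` after setting `x_M = 1` (labels equal to `0` or to `M`
are discarded). -/
noncomputable def xexpM (M : ℕ) : ℕ →₀ ℕ :=
  ∑ i, if P.w i ≠ 0 ∧ P.w i ≠ M then Finsupp.single (P.w i) 1 else 0

/-- The exponent vector of `x^P` after setting `x_{max(w)} = 1`. -/
noncomputable def xexpMax : ℕ →₀ ℕ := P.xexpM P.wmax

end DecPath

/-- The coefficient ring `ℤ[q,t]`. -/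
abbrev Rqt : Type := MvPolynomial (Fin 2) ℤ

/-- The variable `q`. -/
noncomputable def q : Rqt := MvPolynomial.X 0

/-- The variable `t`. -/
noncomputable def t : Rqt := MvPolynomial.X 1

/-- The Gaussian binomial coefficient `[n choose k]_q`, defined by the `q`-Pascal rule. -/
noncomputable def qbinom : ℕ → ℕ → Rqt
  | _, 0 => 1
  | 0, _ + 1 => 0
  | n + 1, k + 1 => qbinom n k + q ^ (k + 1) * qbinom n (k + 1)

/-!
Send each diagonal north step `i` with maximal label to the last undecorated diagonal step
`φ i ≤ i`; since all labels are positive, these are exactly the steps counted by `touch`. The map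
`φ` is strictly monotone on maximal diagonal steps `i₁ < i₂`: the first diagonal step `d` after
`i₁` cannot be decorated. Indeed, if `d` is a contractible valley on the diagonal and `d'` the
previous diagonal step, then either `d' = d - 1` and `w d' < w d`, or step `d' + 1` is a rise
and `w d' < w (d' + 1)`; so the label of `d' = i₁` would not be maximal.
-/

namespace DecPath

variable {N : ℕ} (P : DecPath N)

theorem w_le_wmax (i : Fin N) : P.w i ≤ P.wmax :=
  Finset.le_sup (Finset.mem_univ i)

theorem w_pos_of_zeros_eq_zero (hzeros : P.zeros = 0) (i : Fin N) : 0 < P.w i := by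
  rw [zeros, card_eq_zero, filter_eq_empty_iff] at hzeros
  exact Nat.pos_of_ne_zero (hzeros (mem_univ i))

theorem exists_w_gt_of_isValley {d d' : Fin N} (hv : IsValley P.a P.w d) (hd : P.a d = 0)
    (hd'd : d' < d) (hd' : P.a d' = 0) (hgap : ∀ j, d' < j → j < d → P.a j ≠ 0) :
    ∃ j, P.w d' < P.w j := by
  let j : Fin N := ⟨d' + 1, by omega⟩
  have hj_pred : fpred j = d' := Fin.ext (by simp [fpred, j])
  by_cases hj : P.a j = 0
  · have hjd : j = d := by
      by_contra hne
      have hlt : j < d := lt_of_le_of_ne (Fin.le_def.2 (by simp [j]; omega)) hne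
      exact hgap j (Fin.lt_def.2 (by simp [j])) hlt hj
    have hd_pred : fpred d = d' := hjd ▸ hj_pred
    rcases hv.2 with hlt | ⟨-, hw⟩
    · rw [hd_pred, hd, hd'] at hlt
      exact absurd hlt (lt_irrefl 0)
    · exact ⟨d, hd_pred ▸ hw⟩
  · have hw := P.w_incr j (by simp [j]) (by rw [hj_pred, hd']; omega)
    exact ⟨j, hj_pred ▸ hw⟩

def undecoratedDiagonal : Finset (Fin N) :=
  univ.filter fun j => j ∉ P.dv ∧ P.a j = 0

theorem touch_eq_card_undecoratedDiagonal (hzeros : P.zeros = 0) :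
    P.touch = #P.undecoratedDiagonal := by
  rw [touch, undecoratedDiagonal]
  congr 1
  exact filter_congr fun i _ => by simp [P.w_pos_of_zeros_eq_zero hzeros i]

theorem exists_mem_undecoratedDiagonal_of_w_maximal {i₁ i₂ : Fin N} (h : i₁ < i₂)
    (ha₁ : P.a i₁ = 0) (hw₁ : ∀ j, P.w j ≤ P.w i₁) (ha₂ : P.a i₂ = 0) :
    ∃ d ∈ P.undecoratedDiagonal, i₁ < d ∧ d ≤ i₂ := by
  let D := univ.filter fun d => i₁ < d ∧ d ≤ i₂ ∧ P.a d = 0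
  obtain ⟨d, hdD, hd_min⟩ :=
    D.exists_min_image id ⟨i₂, mem_filter.2 ⟨mem_univ _, h, le_rfl, ha₂⟩⟩
  obtain ⟨-, hi₁d, hdi₂, had⟩ := mem_filter.1 hdD
  refine ⟨d, mem_filter.2 ⟨mem_univ _, fun hdv => ?_, had⟩, hi₁d, hdi₂⟩
  obtain ⟨j, hj⟩ := P.exists_w_gt_of_isValley (P.dv_valley d hdv) had hi₁d ha₁
    fun j hi₁j hjd haj => (hjd.trans_le (hd_min j (mem_filter.2
      ⟨mem_univ _, hi₁j, hjd.le.trans hdi₂, haj⟩))).false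
  exact (hw₁ j).not_gt hj

theorem zero_mem_undecoratedDiagonal (hN : 0 < N) : ⟨0, hN⟩ ∈ P.undecoratedDiagonal :=
  mem_filter.2 ⟨mem_univ _, fun hdv => (P.dv_valley _ hdv).1.false, P.a_first _ rfl⟩

noncomputable def lastUndecoratedDiagonal (i : Fin N) : Fin N :=
  (P.undecoratedDiagonal.filter (· ≤ i)).max'
    ⟨⟨0, i.pos⟩, mem_filter.2 ⟨P.zero_mem_undecoratedDiagonal i.pos, Nat.zero_le _⟩⟩

theorem lastUndecoratedDiagonal_mem_filter (i : Fin N) :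
    P.lastUndecoratedDiagonal i ∈ P.undecoratedDiagonal.filter (· ≤ i) :=
  max'_mem _ _

theorem lastUndecoratedDiagonal_mem (i : Fin N) :
    P.lastUndecoratedDiagonal i ∈ P.undecoratedDiagonal :=
  (mem_filter.1 (P.lastUndecoratedDiagonal_mem_filter i)).1

theorem lastUndecoratedDiagonal_le (i : Fin N) : P.lastUndecoratedDiagonal i ≤ i :=
  (mem_filter.1 (P.lastUndecoratedDiagonal_mem_filter i)).2

theorem le_lastUndecoratedDiagonal {i j : Fin N} (hj : j ∈ P.undecoratedDiagonal) (hji : j ≤ i) :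
    j ≤ P.lastUndecoratedDiagonal i :=
  le_max' _ _ (mem_filter.2 ⟨hj, hji⟩)

theorem strictMonoOn_lastUndecoratedDiagonal :
    StrictMonoOn P.lastUndecoratedDiagonal {i | P.w i = P.wmax ∧ P.a i = 0} := by
  rintro i₁ ⟨hw₁, ha₁⟩ i₂ ⟨-, ha₂⟩ h
  obtain ⟨d, hd, hi₁d, hdi₂⟩ := P.exists_mem_undecoratedDiagonal_of_w_maximal h ha₁
    (fun j => hw₁ ▸ P.w_le_wmax j) ha₂
  calc P.lastUndecoratedDiagonal i₁ ≤ i₁ := P.lastUndecoratedDiagonal_le i₁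
    _ < d := hi₁d
    _ ≤ P.lastUndecoratedDiagonal i₂ := P.le_lastUndecoratedDiagonal hd hdi₂

end DecPath

theorem maximal_diagonal_steps_le_touch_general
    (n r : ℕ) (P : DecPath n)
    (hzeros : P.zeros = 0) (hr : P.touch = r) :
    (Finset.univ.filter fun i : Fin n => P.w i = P.wmax ∧ P.a i = 0).card ≤ r := by
  rw [← hr, P.touch_eq_card_undecoratedDiagonal hzeros]
  refine card_le_card_of_injOn P.lastUndecoratedDiagonal
    (fun i _ => P.lastUndecoratedDiagonal_mem i) ?_
  simpa only [coe_filter, mem_univ, true_and] using P.strictMonoOn_lastUndecoratedDiagonal.injOn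

/-- Let `P ∈ LD(n)^{•k}` (no zero labels) with `n ≥ 1` and
`touch P = r`. Then the number of north steps labelled with the maximal label `M`
starting on the main diagonal is at most `r`. -/
theorem maximal_diagonal_steps_le_touch
    (n k r : ℕ) (hn : 1 ≤ n) (P : DecPath n)
    (hzeros : P.zeros = 0) (hdv : P.dv.card = k) (hr : P.touch = r) :
    (Finset.univ.filter fun i : Fin n => P.w i = P.wmax ∧ P.a i = 0).card ≤ r :=
  maximal_diagonal_steps_le_touch_general n r P hzeros hr
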